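/- Let (M_k)_{k≥1} be invertible real n×n matrices and (Ω_k)_{k≥0} real symmetric n×n matrices. For k ≥ 1 let Z_k be the 2n×2n block matrix Z_k = [[M_k, 0], [M_k^{-ᵀ}Ω_{k−1}, M_k^{-ᵀ}]]. Let M_{k:l} = M_k⋯M_{l+1} (with M_{k:k} = I) and Γ_k = Σ_{l=0}^{k−1} M_{k:l}^{-ᵀ}Ω_lM_{k:l}^{-1}. Then for every k ≥ 1 the product Z_k Z_{k−1}⋯Z_1 equals the block matrix [[M_{k:0}, 0], [Γ_kM_{k:0}, M_{k:0}^{-ᵀ}]]. -/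
import Mathlib


open Matrix

/-- `Mres M l j` is the resolvent `M_{(l+j):l} = M_{l+j} ⋯ M_{l+1}`, so that
`M_{k:l} = Mres M l (k - l)` for `k ≥ l`, and `M_{k:k} = 1`. -/
def Mres {n : ℕ} (M : ℕ → Matrix (Fin n) (Fin n) ℝ) (l : ℕ) :
    ℕ → Matrix (Fin n) (Fin n) ℝ
  | 0 => 1
  | j + 1 => M (l + j + 1) * Mres M l j

/-- The information matrix `Γ_k = Σ_{l=0}^{k-1} M_{k:l}⁻ᵀ * Ω_l * M_{k:l}⁻¹`. -/
noncomputable def Gamma {n : ℕ} (M Ω : ℕ → Matrix (Fin n) (Fin n) ℝ) (k : ℕ) :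
    Matrix (Fin n) (Fin n) ℝ :=
  ∑ l ∈ Finset.range k, ((Mres M l (k - l))⁻¹)ᵀ * Ω l * (Mres M l (k - l))⁻¹

/-- The one-step symplectic transition matrix of the perfect-model Kalman
filter: `Z_k = [[M_k, 0], [M_k⁻ᵀ Ω_{k-1}, M_k⁻ᵀ]]`. -/
noncomputable def Zmat {n : ℕ} (M Ω : ℕ → Matrix (Fin n) (Fin n) ℝ) (k : ℕ) :
    Matrix (Fin n ⊕ Fin n) (Fin n ⊕ Fin n) ℝ :=
  Matrix.fromBlocks (M k) 0 (((M k)⁻¹)ᵀ * Ω (k - 1)) (((M k)⁻¹)ᵀ)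

/-- `Zprod M Ω k` is the product `Z_k * Z_{k-1} * ⋯ * Z_1`. -/
noncomputable def Zprod {n : ℕ} (M Ω : ℕ → Matrix (Fin n) (Fin n) ℝ) :
    ℕ → Matrix (Fin n ⊕ Fin n) (Fin n ⊕ Fin n) ℝ
  | 0 => 1
  | k + 1 => Zmat M Ω (k + 1) * Zprod M Ω k

lemma Gamma_succ {n : ℕ} (M Ω : ℕ → Matrix (Fin n) (Fin n) ℝ) (k : ℕ) :
    Gamma M Ω (k + 1)
      = ((M (k + 1))⁻¹)ᵀ * (Gamma M Ω k + Ω k) * (M (k + 1))⁻¹ := by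
  unfold Gamma
  rw [Finset.sum_range_succ]
  have hterm : ∀ l ∈ Finset.range k,
      ((Mres M l (k + 1 - l))⁻¹)ᵀ * Ω l * (Mres M l (k + 1 - l))⁻¹
      = ((M (k + 1))⁻¹)ᵀ *
          (((Mres M l (k - l))⁻¹)ᵀ * Ω l * (Mres M l (k - l))⁻¹) *
            (M (k + 1))⁻¹ := by
    intro l hl
    have hl' : l < k := Finset.mem_range.mp hl
    have h1 : k + 1 - l = (k - l) + 1 := by omega
    have h2 : l + (k - l) + 1 = k + 1 := by omega
    rw [h1, Mres, h2, Matrix.mul_inv_rev, Matrix.transpose_mul]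
    noncomm_ring
  rw [Finset.sum_congr rfl hterm]
  have hlast : Mres M k (k + 1 - k) = M (k + 1) := by
    have : k + 1 - k = 1 := by omega
    rw [this]
    show M (k + 0 + 1) * (1 : Matrix (Fin n) (Fin n) ℝ) = M (k + 1)
    simp
  rw [hlast, mul_add, add_mul]
  congr 1
  rw [Finset.mul_sum, Finset.sum_mul]

lemma Mres_zero_succ {n : ℕ} (M : ℕ → Matrix (Fin n) (Fin n) ℝ) (k : ℕ) :
    Mres M 0 (k + 1) = M (k + 1) * Mres M 0 k := by
  show M (0 + k + 1) * Mres M 0 k = _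
  rw [Nat.zero_add]

/-- Block formula for the product of the symplectic transition matrices:
`Z_k Z_{k-1} ⋯ Z_1 = [[M_{k:0}, 0], [Γ_k M_{k:0}, M_{k:0}⁻ᵀ]]` for every `k ≥ 1`. -/
theorem kf_symplectic_product {n : ℕ}
    (M Ω : ℕ → Matrix (Fin n) (Fin n) ℝ)
    (hM : ∀ k, 1 ≤ k → IsUnit (M k)) (hΩ : ∀ k, (Ω k)ᵀ = Ω k) :
    ∀ k, 1 ≤ k →
      Zprod M Ω k
        = Matrix.fromBlocks (Mres M 0 k) 0
            (Gamma M Ω k * Mres M 0 k) (((Mres M 0 k)⁻¹)ᵀ) := by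
  intro k
  induction k with
  | zero => omega
  | succ k ih =>
    intro _
    have hdet : IsUnit (M (k + 1)).det := by
      rw [← Matrix.isUnit_iff_isUnit_det]; exact hM (k + 1) (by omega)
    have hinv : (M (k + 1))⁻¹ * M (k + 1) = 1 := Matrix.nonsing_inv_mul _ hdet
    rcases Nat.eq_zero_or_pos k with rfl | hk
    · show Zmat M Ω 1 * Zprod M Ω 0 = _
      have hM1 : Mres M 0 1 = M 1 := by
        rw [Mres_zero_succ]; show M 1 * 1 = M 1; simp [Mres]
      have hG1 : Gamma M Ω 1 * Mres M 0 1 = ((M 1)⁻¹)ᵀ * Ω 0 := by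
        rw [hM1]
        unfold Gamma
        rw [Finset.sum_range_one, hM1]
        rw [Matrix.mul_assoc, Matrix.mul_assoc, hinv, Matrix.mul_one]
      rw [Zmat, Zprod, Matrix.mul_one, hG1, hM1]
    · have IH := ih hk
      rw [show Zprod M Ω (k + 1) = Zmat M Ω (k + 1) * Zprod M Ω k from rfl, IH,
        Zmat, Matrix.fromBlocks_multiply]
      have hΩidx : (k + 1) - 1 = k := by omega
      rw [hΩidx]
      have hTL : M (k + 1) * Mres M 0 k + 0 * (Gamma M Ω k * Mres M 0 k)
          = Mres M 0 (k + 1) := by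
        rw [Mres_zero_succ M k]; simp
      have hTR : M (k + 1) * 0 + 0 * ((Mres M 0 k)⁻¹)ᵀ
          = (0 : Matrix (Fin n) (Fin n) ℝ) := by simp
      have hBL : ((M (k + 1))⁻¹)ᵀ * Ω k * Mres M 0 k
            + ((M (k + 1))⁻¹)ᵀ * (Gamma M Ω k * Mres M 0 k)
          = Gamma M Ω (k + 1) * Mres M 0 (k + 1) := by
        rw [Gamma_succ, Mres_zero_succ M k]
        rw [Matrix.mul_assoc (((M (k + 1))⁻¹)ᵀ * (Gamma M Ω k + Ω k))]
        rw [← Matrix.mul_assoc (M (k + 1))⁻¹, hinv, Matrix.one_mul]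
        rw [mul_add, add_mul]
        rw [add_comm]
        rw [Matrix.mul_assoc, Matrix.mul_assoc]
      have hBR : ((M (k + 1))⁻¹)ᵀ * Ω k * 0 + ((M (k + 1))⁻¹)ᵀ * ((Mres M 0 k)⁻¹)ᵀ
          = ((Mres M 0 (k + 1))⁻¹)ᵀ := by
        rw [Mres_zero_succ M k, Matrix.mul_inv_rev, Matrix.transpose_mul]
        simp
      rw [hTL, hTR, hBL, hBR]
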